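/- Let F: F' → F be a fully faithful map between essentially small Hom-finite Frobenius categories linear over a finite field. Then the induced linear map F_*: H(F') → H(F), [M] ↦ [F(M)], between Hall algebras is an injective homomorphism of algebras. -/

import Mathlib

/-!
Common definitions for formalizing "semi-derived Hall algebras" (Gorsky, arXiv:1409.6798):
Quillen exact structures, Frobenius categories, conflations and (Yoneda-style) `Ext`-sets,
Hall algebra structure constants, stable categories, suspension/syzygy data,
Grothendieck groups, and localizations of Hall algebras.
-/

open CategoryTheory CategoryTheory.Limits ZeroObject

universe w v u v' u'

namespace HallPaper

section IsoClasses

variable {𝒞 : Type u} [Category.{v} 𝒞] {𝒟 : Type u'} [Category.{v'} 𝒟]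

/-- The set of isomorphism classes of objects of a category. -/
def IsoCl (𝒞 : Type u) [Category.{v} 𝒞] : Type u :=
  Quotient (isIsomorphicSetoid 𝒞)

/-- The isomorphism class of an object. -/
def skel (A : 𝒞) : IsoCl 𝒞 := Quotient.mk (isIsomorphicSetoid 𝒞) A

/-- The basis vector of the Hall module (the `ℚ`-vector space with basis the isomorphism
classes of objects) corresponding to an object. -/
noncomputable def hallBasis (A : 𝒞) : IsoCl 𝒞 →₀ ℚ := Finsupp.single (skel A) 1

/-- The map on isomorphism classes induced by a functor. -/
def skelMap (F : 𝒞 ⥤ 𝒟) : IsoCl 𝒞 → IsoCl 𝒟 :=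
  @Quotient.map _ _ (isIsomorphicSetoid 𝒞) (isIsomorphicSetoid 𝒟) F.obj
    (fun _ _ h => h.elim fun e => ⟨F.mapIso e⟩)

/-- The `ℚ`-linear map between Hall modules induced by a functor,
`[M] ↦ [F(M)]` on basis vectors. -/
noncomputable def hallMap (F : 𝒞 ⥤ 𝒟) : (IsoCl 𝒞 →₀ ℚ) →ₗ[ℚ] (IsoCl 𝒟 →₀ ℚ) :=
  Finsupp.lmapDomain ℚ ℚ (skelMap F)

end IsoClasses

/-- A Quillen exact structure on an additive category, given by the class of conflations
(admissible short exact sequences) `X ↣ Y ↠ Z`, encoded as the predicate `conf i p`. -/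
structure ExactStructure (𝒞 : Type u) [Category.{v} 𝒞] [Preadditive 𝒞] [HasZeroObject 𝒞]
    [HasBinaryBiproducts 𝒞] where
  /-- `conf i p` says that `X ↣ Y ↠ Z` is a conflation. -/
  conf : ∀ {X Y Z : 𝒞}, (X ⟶ Y) → (Y ⟶ Z) → Prop
  comp_zero : ∀ {X Y Z : 𝒞} {i : X ⟶ Y} {p : Y ⟶ Z}, conf i p → i ≫ p = 0
  is_kernel : ∀ {X Y Z : 𝒞} {i : X ⟶ Y} {p : Y ⟶ Z} (h : conf i p),
    Nonempty (IsLimit (KernelFork.ofι i (comp_zero h)))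
  is_cokernel : ∀ {X Y Z : 𝒞} {i : X ⟶ Y} {p : Y ⟶ Z} (h : conf i p),
    Nonempty (IsColimit (CokernelCofork.ofπ p (comp_zero h)))
  conf_iso : ∀ {X Y Z X' Y' Z' : 𝒞} {i : X ⟶ Y} {p : Y ⟶ Z}
    (eX : X ≅ X') (eY : Y ≅ Y') (eZ : Z ≅ Z') {i' : X' ⟶ Y'} {p' : Y' ⟶ Z'},
    conf i p → i ≫ eY.hom = eX.hom ≫ i' → p ≫ eZ.hom = eY.hom ≫ p' → conf i' p'
  split_conf : ∀ X Y : 𝒞, conf (biprod.inl : X ⟶ X ⊞ Y) (biprod.snd : X ⊞ Y ⟶ Y)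
  infl_comp : ∀ {X Y Z : 𝒞} (i : X ⟶ Y) (j : Y ⟶ Z),
    (∃ (W : 𝒞) (p : Y ⟶ W), conf i p) → (∃ (W : 𝒞) (p : Z ⟶ W), conf j p) →
    ∃ (W : 𝒞) (p : Z ⟶ W), conf (i ≫ j) p
  defl_comp : ∀ {X Y Z : 𝒞} (p : X ⟶ Y) (q : Y ⟶ Z),
    (∃ (W : 𝒞) (i : W ⟶ X), conf i p) → (∃ (W : 𝒞) (i : W ⟶ Y), conf i q) →
    ∃ (W : 𝒞) (i : W ⟶ X), conf i (p ≫ q)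
  pushout_infl : ∀ {X Y Z X' : 𝒞} {i : X ⟶ Y} {p : Y ⟶ Z}, conf i p → ∀ f : X ⟶ X',
    ∃ (Y' : 𝒞) (i' : X' ⟶ Y') (g : Y ⟶ Y'), IsPushout i f g i' ∧
      ∃ (W : 𝒞) (p' : Y' ⟶ W), conf i' p'
  pullback_defl : ∀ {X Y Z Z' : 𝒞} {i : X ⟶ Y} {p : Y ⟶ Z}, conf i p → ∀ f : Z' ⟶ Z,
    ∃ (Y' : 𝒞) (p' : Y' ⟶ Z') (g : Y' ⟶ Y), IsPullback g p' p f ∧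
      ∃ (W : 𝒞) (i' : W ⟶ Y'), conf i' p'

section Exact

variable {𝒞 : Type u} [Category.{v} 𝒞] [Preadditive 𝒞] [HasZeroObject 𝒞] [HasBinaryBiproducts 𝒞]

/-- An object `P` is projective (relative to an exact structure) if any morphism from `P`
lifts along every deflation. Equivalently, `Ext¹(P, -) = 0`. -/
def ExactStructure.Proj (E : ExactStructure 𝒞) (P : 𝒞) : Prop :=
  ∀ ⦃X Y Z : 𝒞⦄ (i : X ⟶ Y) (p : Y ⟶ Z), E.conf i p → ∀ f : P ⟶ Z, ∃ g : P ⟶ Y, g ≫ p = f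

/-- An object `I` is injective (relative to an exact structure) if any morphism to `I`
extends along every inflation. Equivalently, `Ext¹(-, I) = 0`. -/
def ExactStructure.Inj (E : ExactStructure 𝒞) (I : 𝒞) : Prop :=
  ∀ ⦃X Y Z : 𝒞⦄ (i : X ⟶ Y) (p : Y ⟶ Z), E.conf i p → ∀ f : X ⟶ I, ∃ g : Y ⟶ I, i ≫ g = f

/-- A Frobenius category: an exact category with enough projectives and enough injectives,
in which the projective objects coincide with the injective objects. -/
structure IsFrobenius (E : ExactStructure 𝒞) : Prop where
  enough_proj : ∀ X : 𝒞, ∃ (P W : 𝒞) (i : W ⟶ P) (p : P ⟶ X), E.Proj P ∧ E.conf i p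
  enough_inj : ∀ X : 𝒞, ∃ (I W : 𝒞) (i : X ⟶ I) (p : I ⟶ W), E.Inj I ∧ E.conf i p
  proj_iff_inj : ∀ P : 𝒞, E.Proj P ↔ E.Inj P

/-- A conflation `C ↣ mid ↠ A`, i.e. an extension of `A` by `C`. -/
structure Conf (E : ExactStructure 𝒞) (A C : 𝒞) where
  mid : 𝒞
  incl : C ⟶ mid
  quot : mid ⟶ A
  isConf : E.conf incl quot

/-- Equivalence of extensions: an isomorphism of the middle terms commuting with the
structure maps (and inducing the identity on the end terms). -/
def ConfRel (E : ExactStructure 𝒞) {A C : 𝒞} (e e' : Conf E A C) : Prop :=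
  ∃ φ : e.mid ≅ e'.mid, e.incl ≫ φ.hom = e'.incl ∧ φ.hom ≫ e'.quot = e.quot

/-- `Ext¹(A, C)`: the set of equivalence classes of extensions of `A` by `C`. -/
def Ext1 (E : ExactStructure 𝒞) (A C : 𝒞) : Type (max u v) :=
  Quot (ConfRel E (A := A) (C := C))

/-- The class of a conflation in `Ext¹`. -/
def Ext1.mk (E : ExactStructure 𝒞) {A C : 𝒞} (e : Conf E A C) : Ext1 E A C :=
  Quot.mk _ e

/-- The class in `Ext¹(A,C)` of the split extension `C ↣ C ⊕ A ↠ A`. -/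
noncomputable def splitExt (E : ExactStructure 𝒞) (A C : 𝒞) : Ext1 E A C :=
  Ext1.mk E ⟨C ⊞ A, biprod.inl, biprod.snd, E.split_conf C A⟩

/-- `|Ext¹(A, C)_B|`: the number of classes of extensions of `A` by `C` whose middle term is
isomorphic to `B`. -/
noncomputable def ext1CardWith (E : ExactStructure 𝒞) (A C B : 𝒞) : ℕ :=
  Nat.card {x : Ext1 E A C // ∃ e : Conf E A C, Ext1.mk E e = x ∧ Nonempty (e.mid ≅ B)}

/-- The structure constant `|Ext¹(A, C)_B| / |Hom(A, C)|` of the Hall algebra. -/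
noncomputable def hallCoeff (E : ExactStructure 𝒞) (A C B : 𝒞) : ℚ :=
  (ext1CardWith E A C B : ℚ) / (Nat.card (A ⟶ C) : ℚ)

/-- A bilinear multiplication on the Hall module with the Hall structure constants:
`[A] ⋄ [C] = ∑_B (|Ext¹(A,C)_B| / |Hom(A,C)|) [B]`. -/
structure HallMul (E : ExactStructure 𝒞) where
  mul : (IsoCl 𝒞 →₀ ℚ) →ₗ[ℚ] (IsoCl 𝒞 →₀ ℚ) →ₗ[ℚ] (IsoCl 𝒞 →₀ ℚ)
  mul_basis : ∀ A C B : 𝒞, mul (hallBasis A) (hallBasis C) (skel B) = hallCoeff E A C B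

/-- A morphism factors through a projective-injective object. -/
def FactorsThruProj (E : ExactStructure 𝒞) {X Y : 𝒞} (f : X ⟶ Y) : Prop :=
  ∃ (P : 𝒞) (u : X ⟶ P) (v : P ⟶ Y), E.Proj P ∧ u ≫ v = f

/-- Morphism space in the stable category: morphisms of `𝒞` modulo those factoring
through projective-injective objects. -/
def StHom (E : ExactStructure 𝒞) (X Y : 𝒞) : Type v :=
  Quot (fun f g : X ⟶ Y => FactorsThruProj E (f - g))

/-- The class in the stable category of a morphism. -/
def StHom.mk (E : ExactStructure 𝒞) {X Y : 𝒞} (f : X ⟶ Y) : StHom E X Y :=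
  Quot.mk _ f

/-- Two objects are isomorphic in the stable category. -/
def StIso (E : ExactStructure 𝒞) (X Y : 𝒞) : Prop :=
  ∃ (f : X ⟶ Y) (g : Y ⟶ X),
    StHom.mk E (f ≫ g) = StHom.mk E (𝟙 X) ∧ StHom.mk E (g ≫ f) = StHom.mk E (𝟙 Y)

/-- The isomorphism classes of objects of the stable category. -/
def StSkel (E : ExactStructure 𝒞) : Type u := Quot (StIso E)

/-- The stable isomorphism class of an object. -/
def stCl (E : ExactStructure 𝒞) (X : 𝒞) : StSkel E := Quot.mk _ X

/-- Suspension data for a Frobenius category: for each object `X` a conflation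
`X ↣ I X ↠ S X` with `I X` projective-injective; `S` implements the suspension functor `Σ`
of the stable category on objects. -/
structure SuspData (E : ExactStructure 𝒞) where
  S : 𝒞 → 𝒞
  I : 𝒞 → 𝒞
  ins : ∀ X : 𝒞, X ⟶ I X
  out : ∀ X : 𝒞, I X ⟶ S X
  proj : ∀ X : 𝒞, E.Proj (I X)
  isConf : ∀ X : 𝒞, E.conf (ins X) (out X)

variable {E : ExactStructure 𝒞}

/-- Iterated suspension `Σⁿ` on objects. -/
def SIter (Sd : SuspData E) : ℕ → 𝒞 → 𝒞
  | 0, X => X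
  | n + 1, X => Sd.S (SIter Sd n X)

/-- Syzygy data for a Frobenius category: for each object `X` a conflation
`Ω X ↣ P X ↠ X` with `P X` projective-injective (a choice of projective covers, giving
projective resolutions). -/
structure SyzData (E : ExactStructure 𝒞) where
  Om : 𝒞 → 𝒞
  P : 𝒞 → 𝒞
  ins : ∀ X : 𝒞, Om X ⟶ P X
  out : ∀ X : 𝒞, P X ⟶ X
  proj : ∀ X : 𝒞, E.Proj (P X)
  isConf : ∀ X : 𝒞, E.conf (ins X) (out X)

/-- Iterated syzygy `Ωⁿ` on objects. -/
def OmIter (D : SyzData E) : ℕ → 𝒞 → 𝒞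
  | 0, X => X
  | n + 1, X => D.Om (OmIter D n X)

/-- The differential `P(Ωⁿ⁺¹ M) ⟶ P(Ωⁿ M)` of the projective resolution
`⋯ → P(Ω² M) → P(Ω M) → P(M) → 0` of `M` determined by syzygy data. -/
def resDiff (D : SyzData E) (n : ℕ) (M : 𝒞) :
    D.P (OmIter D (n + 1) M) ⟶ D.P (OmIter D n M) :=
  D.out (OmIter D (n + 1) M) ≫ D.ins (OmIter D n M)

/-- Cocycles for `Ext^(q+1)(M, N)`: morphisms `P(Ω^(q+1) M) ⟶ N` killed by the differential. -/
def extCocycle (D : SyzData E) (q : ℕ) (M N : 𝒞) : Type v :=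
  {f : D.P (OmIter D (q + 1) M) ⟶ N // resDiff D (q + 1) M ≫ f = 0}

/-- `Ext^(q+1)(M, N)` in the exact category: the `(q+1)`-st cohomology of
`Hom(R(M)•, N)` for the projective resolution `R(M)•` of `M` given by the syzygy data. -/
def extGrp (D : SyzData E) (q : ℕ) (M N : 𝒞) : Type v :=
  Quot (fun f g : extCocycle D q M N =>
    ∃ h : D.P (OmIter D q M) ⟶ N, f.1 - g.1 = resDiff D q M ≫ h)

/-- The truncated relative Euler form
`⟨A,B⟩ = (|Hom_F(A,B)| / |Hom_F̄(A,B)|) ⬝ ∏_{0 < i ≤ N} |Ext^{-i}_F̄(A,B)|^((-1)^(i-1))`,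
where `Ext^{-i}_F̄(A, B) = Hom_F̄(Σⁱ A, B)`.  (Under the "left locally homologically finite"
assumption all but finitely many factors are trivial, so for `N` large enough this is the
relative Euler form.) -/
noncomputable def relEulerAt (Sd : SuspData E) (N : ℕ) (A B : 𝒞) : ℚ :=
  ((Nat.card (A ⟶ B) : ℚ) / (Nat.card (StHom E A B) : ℚ)) *
    ∏ i ∈ Finset.range N, ((Nat.card (StHom E (SIter Sd (i + 1) A) B) : ℚ) ^ ((-1 : ℤ) ^ i))

/-- The truncated structure constants of the derived Hall algebra of the stable category `F̄`:
`(|Ext¹_F̄(A,C)_β| / |Hom_F̄(A,C)|) ⬝ ∏_{0 < i ≤ N} |Ext^{-i}_F̄(A,C)|^((-1)^(i-1))`, where,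
by dévissage, `Ext¹_F̄(A,C)_β` is identified with the set of classes of conflations
`C ↣ mid ↠ A` in `F` whose middle term has stable isomorphism class `β`. -/
noncomputable def stDhCoeffAt (Sd : SuspData E) (N : ℕ) (A C : 𝒞) (β : StSkel E) : ℚ :=
  ((Nat.card {x : Ext1 E A C // ∃ e : Conf E A C, Ext1.mk E e = x ∧ stCl E e.mid = β} : ℚ) /
      (Nat.card (StHom E A C) : ℚ)) *
    ∏ i ∈ Finset.range N, ((Nat.card (StHom E (SIter Sd (i + 1) A) C) : ℚ) ^ ((-1 : ℤ) ^ i))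

end Exact

/-- A bundled associative unital `ℚ`-algebra. -/
structure BundledQAlg : Type (w + 1) where
  carrier : Type w
  [ring : Ring carrier]
  [alg : Algebra ℚ carrier]

attribute [instance] BundledQAlg.ring BundledQAlg.alg

section Localization

variable {𝒞 : Type u} [Category.{v} 𝒞] [Preadditive 𝒞] [HasZeroObject 𝒞] [HasBinaryBiproducts 𝒞]

/-- A realization of the semi-derived Hall algebra `SDH(F, P(F))`: the localization of the
Hall algebra `H(F)` at the classes `[P]` of all projective-injective objects, presented by its
universal property. -/
structure HallLocalization (E : ExactStructure 𝒞) (hm : HallMul E) (A : BundledQAlg.{w}) where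
  φ : (IsoCl 𝒞 →₀ ℚ) →ₗ[ℚ] A.carrier
  mul_hom : ∀ x y, φ (hm.mul x y) = φ x * φ y
  one_hom : φ (hallBasis (0 : 𝒞)) = 1
  inverts : ∀ P : 𝒞, E.Proj P → IsUnit (φ (hallBasis P))
  universal : ∀ (B : BundledQAlg.{w}) (ψ : (IsoCl 𝒞 →₀ ℚ) →ₗ[ℚ] B.carrier),
    (∀ x y, ψ (hm.mul x y) = ψ x * ψ y) → ψ (hallBasis (0 : 𝒞)) = 1 →
    (∀ P : 𝒞, E.Proj P → IsUnit (ψ (hallBasis P))) →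
    ∃! χ : A.carrier →+* B.carrier, ∀ x, χ (φ x) = ψ x

/-- The quantum torus of projective-injectives inside the semi-derived Hall algebra:
the subalgebra generated by the classes `[P]` of projective-injective objects and their
inverses. -/
def quantumTorus {E : ExactStructure 𝒞} {hm : HallMul E} {A : BundledQAlg.{w}}
    (L : HallLocalization E hm A) : Subalgebra ℚ A.carrier :=
  Algebra.adjoin ℚ {x : A.carrier | ∃ P : 𝒞, E.Proj P ∧
    (x = L.φ (hallBasis P) ∨ (x * L.φ (hallBasis P) = 1 ∧ L.φ (hallBasis P) * x = 1))}

end Localization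

section K0

variable {𝒞 : Type u} [Category.{v} 𝒞] [Preadditive 𝒞] [HasZeroObject 𝒞] [HasBinaryBiproducts 𝒞]

/-- The relations defining the split Grothendieck group of an additive category:
isomorphic objects are identified and `[A ⊕ B] = [A] + [B]`. -/
def splitRelations (𝒞 : Type u) [Category.{v} 𝒞] [Preadditive 𝒞] [HasZeroObject 𝒞]
    [HasBinaryBiproducts 𝒞] : Set (FreeAbelianGroup 𝒞) :=
  {x | ∃ A B : 𝒞, Nonempty (A ≅ B) ∧
        x = FreeAbelianGroup.of A - FreeAbelianGroup.of B} ∪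
  {x | ∃ A B : 𝒞, x = FreeAbelianGroup.of (A ⊞ B)
        - FreeAbelianGroup.of A - FreeAbelianGroup.of B}

/-- The split Grothendieck group `K₀^split` of an additive category. -/
def K0split (𝒞 : Type u) [Category.{v} 𝒞] [Preadditive 𝒞] [HasZeroObject 𝒞]
    [HasBinaryBiproducts 𝒞] : Type u :=
  FreeAbelianGroup 𝒞 ⧸ AddSubgroup.closure (splitRelations 𝒞)

noncomputable instance : AddCommGroup (K0split 𝒞) :=
  QuotientAddGroup.Quotient.addCommGroup _

/-- The class of an object in the split Grothendieck group. -/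
def K0split.gen (A : 𝒞) : K0split 𝒞 :=
  QuotientAddGroup.mk (FreeAbelianGroup.of A)

/-- The relations defining the Grothendieck group of the (split exact) full subcategory of
projective-injective objects. -/
def projRelations (E : ExactStructure 𝒞) : Set (FreeAbelianGroup {X : 𝒞 // E.Proj X}) :=
  {x | ∃ A B : {X : 𝒞 // E.Proj X}, Nonempty (A.1 ≅ B.1) ∧
        x = FreeAbelianGroup.of A - FreeAbelianGroup.of B} ∪
  {x | ∃ A B C : {X : 𝒞 // E.Proj X}, Nonempty (C.1 ≅ A.1 ⊞ B.1) ∧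
        x = FreeAbelianGroup.of C - FreeAbelianGroup.of A - FreeAbelianGroup.of B}

/-- The Grothendieck group `K₀(P(F))` of the full subcategory of projective-injective
objects (its exact structure splits, so this is the split Grothendieck group). -/
def K0P (E : ExactStructure 𝒞) : Type u :=
  FreeAbelianGroup {X : 𝒞 // E.Proj X} ⧸ AddSubgroup.closure (projRelations E)

noncomputable instance (E : ExactStructure 𝒞) : AddCommGroup (K0P E) :=
  QuotientAddGroup.Quotient.addCommGroup _

/-- The class of a projective-injective object in `K₀(P(F))`. -/
def K0P.gen (E : ExactStructure 𝒞) (X : 𝒞) (hX : E.Proj X) : K0P E :=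
  QuotientAddGroup.mk (FreeAbelianGroup.of ⟨X, hX⟩)

end K0

section StMap

variable {𝒞' : Type u'} [Category.{v'} 𝒞'] [Preadditive 𝒞'] [HasZeroObject 𝒞']
  [HasBinaryBiproducts 𝒞']
variable {𝒞 : Type u} [Category.{v} 𝒞] [Preadditive 𝒞] [HasZeroObject 𝒞] [HasBinaryBiproducts 𝒞]

/-- The map induced on stable morphism spaces by an additive functor sending
projective-injectives to projective-injectives. -/
def stMap (E' : ExactStructure 𝒞') (E : ExactStructure 𝒞) (F : 𝒞' ⥤ 𝒞) [F.Additive]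
    (hproj : ∀ P : 𝒞', E'.Proj P → E.Proj (F.obj P)) (X Y : 𝒞') :
    StHom E' X Y → StHom E (F.obj X) (F.obj Y) :=
  Quot.map (fun f => F.map f) (by
    rintro f g ⟨P, u, v, hP, huv⟩
    exact ⟨F.obj P, F.map u, F.map v, hproj P hP, by rw [← F.map_comp, huv, F.map_sub]⟩)

end StMap

/-!
Full faithfulness makes `[M] ↦ [F M]` injective on isomorphism classes, preserves the orders of
`Hom`-sets, and makes `Ext¹(A, C) → Ext¹(F A, F C)` injective and compatible with middle terms.
This map is also surjective: given `F C ↣ M ↠ F A`, embed `C ↣ I ↠ S` with `I`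
projective-injective. As `F I` is injective, `F j` extends over `M`, and by the five lemma the
extension is the pullback of `F (C ↣ I ↠ S)` along the induced map `F A ⟶ F S`, which is also
the image of the corresponding pullback in `𝒞'`. So the Hall numbers agree, and those at classes
outside the essential image of `F` vanish.
-/

section IsoClasses

variable {𝒞' : Type u'} [Category.{v'} 𝒞'] {𝒞 : Type u} [Category.{v} 𝒞]

lemma skel_surjective : Function.Surjective (skel : 𝒞 → IsoCl 𝒞) :=
  Quotient.mk_surjective

lemma skelMap_skel (F : 𝒞' ⥤ 𝒞) (A : 𝒞') : skelMap F (skel A) = skel (F.obj A) :=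
  rfl

lemma skelMap_injective (F : 𝒞' ⥤ 𝒞) [F.Full] [F.Faithful] : Function.Injective (skelMap F) := by
  intro a b hab
  obtain ⟨A, rfl⟩ := skel_surjective a
  obtain ⟨B, rfl⟩ := skel_surjective b
  exact Quotient.sound ⟨F.preimageIso (Quotient.exact hab).some⟩

lemma hallMap_hallBasis (F : 𝒞' ⥤ 𝒞) (A : 𝒞') : hallMap F (hallBasis A) = hallBasis (F.obj A) :=
  Finsupp.mapDomain_single

lemma hallMap_injective (F : 𝒞' ⥤ 𝒞) [F.Full] [F.Faithful] : Function.Injective (hallMap F) :=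
  Finsupp.mapDomain_injective (skelMap_injective F)

end IsoClasses

namespace ExactStructure

variable {𝒞 : Type u} [Category.{v} 𝒞] [Preadditive 𝒞] [HasZeroObject 𝒞] [HasBinaryBiproducts 𝒞]
  (E : ExactStructure 𝒞) {X Y Z : 𝒞} {i : X ⟶ Y} {p : Y ⟶ Z}

lemma mono_of_conf (h : E.conf i p) : Mono i :=
  Preadditive.mono_of_cancel_zero i fun g hg =>
    Fork.IsLimit.hom_ext (E.is_kernel h).some (by simpa using hg)

lemma epi_of_conf (h : E.conf i p) : Epi p :=
  Preadditive.epi_of_cancel_zero p fun g hg =>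
    Cofork.IsColimit.hom_ext (E.is_cokernel h).some (by simpa using hg)

lemma exists_lift_of_conf (h : E.conf i p) {T : 𝒞} (f : T ⟶ Y) (hf : f ≫ p = 0) :
    ∃ s : T ⟶ X, s ≫ i = f :=
  ⟨_, (KernelFork.IsLimit.lift' (E.is_kernel h).some f hf).2⟩

lemma exists_desc_of_conf (h : E.conf i p) {T : 𝒞} (f : Y ⟶ T) (hf : i ≫ f = 0) :
    ∃ s : Z ⟶ T, p ≫ s = f :=
  ⟨_, (CokernelCofork.IsColimit.desc' (E.is_cokernel h).some f hf).2⟩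

lemma conf_of_isLimit (h : E.conf i p) {X' : 𝒞} {i' : X' ⟶ Y} (hi' : i' ≫ p = 0)
    (hlim : IsLimit (KernelFork.ofι i' hi')) : E.conf i' p :=
  E.conf_iso (IsLimit.conePointUniqueUpToIso (E.is_kernel h).some hlim) (Iso.refl Y)
    (Iso.refl Z) h (by simpa using
      (IsLimit.conePointUniqueUpToIso_hom_comp (E.is_kernel h).some hlim .zero).symm) (by simp)

lemma exists_conf_pullback (h : E.conf i p) {Z' : 𝒞} (f : Z' ⟶ Z) :
    ∃ (Y' : 𝒞) (i' : X ⟶ Y') (p' : Y' ⟶ Z') (g : Y' ⟶ Y),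
      IsPullback g p' p f ∧ i' ≫ g = i ∧ E.conf i' p' := by
  obtain ⟨Y', p', g, hpb, W, k, hk⟩ := E.pullback_defl h f
  have hw : i ≫ p = 0 ≫ f := by rw [E.comp_zero h, zero_comp]
  have hig : hpb.lift i 0 hw ≫ g = i := hpb.lift_fst _ _ _
  have hip : hpb.lift i 0 hw ≫ p' = 0 := hpb.lift_snd _ _ _
  have := E.mono_of_conf h
  have : Mono (hpb.lift i 0 hw) := mono_of_mono_fac hig
  refine ⟨Y', hpb.lift i 0 hw, p', g, hpb, hig, E.conf_of_isLimit hk hip ?_⟩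
  refine KernelFork.IsLimit.ofι' _ hip fun τ hτ => ?_
  have hτg : (τ ≫ g) ≫ p = 0 := by rw [Category.assoc, hpb.w, ← Category.assoc, hτ, zero_comp]
  obtain ⟨σ, hσ⟩ := KernelFork.IsLimit.lift' (E.is_kernel h).some (τ ≫ g) hτg
  exact ⟨σ, hpb.hom_ext (by simpa [hig] using hσ) (by simp [hip, hτ])⟩

lemma isIso_of_conf_comm {Y' : 𝒞} {i' : X ⟶ Y'} {p' : Y' ⟶ Z} (h : E.conf i p)
    (h' : E.conf i' p') (u : Y ⟶ Y') (hi : i ≫ u = i') (hp : u ≫ p' = p) : IsIso u := by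
  have := E.mono_of_conf h'
  have : Mono u := Preadditive.mono_of_cancel_zero u fun ρ hρ => by
    obtain ⟨σ, rfl⟩ := E.exists_lift_of_conf h ρ (by rw [← hp, ← Category.assoc, hρ, zero_comp])
    have hσ : σ = 0 := zero_of_comp_mono i' (by rw [← hi, ← Category.assoc, hρ])
    rw [hσ, zero_comp]
  -- on the pullback `D` of `p` along `p'`, the map `r ≫ i + g` is carried by `u` to the deflation
  -- `π`, so (`u` being mono) it descends along `π` to the inverse `w` of `u`
  obtain ⟨D, π, g, hpb, W, k, hk⟩ := E.pullback_defl h p'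
  have := E.epi_of_conf hk
  obtain ⟨r, hr⟩ := E.exists_lift_of_conf h' (π - g ≫ u) (by simp [← hpb.w, hp])
  have hs : (r ≫ i + g) ≫ u = π := by simp [hi, hr]
  obtain ⟨w, hw⟩ := E.exists_desc_of_conf hk (r ≫ i + g)
    (by rw [← cancel_mono u, Category.assoc, hs, E.comp_zero hk, zero_comp])
  obtain ⟨a, hag, haπ⟩ : ∃ a : Y ⟶ D, a ≫ g = 𝟙 Y ∧ a ≫ π = u :=
    ⟨hpb.lift (𝟙 Y) u (by simp [hp]), hpb.lift_fst _ _ _, hpb.lift_snd _ _ _⟩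
  have har : a ≫ r = 0 := by
    rw [← cancel_mono i', Category.assoc, hr, Preadditive.comp_sub, haπ, ← Category.assoc, hag]
    simp
  refine ⟨w, ?_, ?_⟩
  · rw [← haπ, Category.assoc, hw, Preadditive.comp_add, ← Category.assoc, har, hag]; simp
  · rw [← cancel_epi π, ← Category.assoc, hw, hs, Category.comp_id]

end ExactStructure

section Functor

variable {𝒞' : Type u'} [Category.{v'} 𝒞'] [Preadditive 𝒞'] [HasZeroObject 𝒞']
  [HasBinaryBiproducts 𝒞']
  {𝒞 : Type u} [Category.{v} 𝒞] [Preadditive 𝒞] [HasZeroObject 𝒞] [HasBinaryBiproducts 𝒞]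
  {E' : ExactStructure 𝒞'} {E : ExactStructure 𝒞} {F : 𝒞' ⥤ 𝒞}

def IsExactFunctor (E' : ExactStructure 𝒞') (E : ExactStructure 𝒞) (F : 𝒞' ⥤ 𝒞) : Prop :=
  ∀ {X Y Z : 𝒞'} (i : X ⟶ Y) (p : Y ⟶ Z), E'.conf i p → E.conf (F.map i) (F.map p)

lemma confRel_equivalence (E : ExactStructure 𝒞) (A C : 𝒞) :
    Equivalence (ConfRel E (A := A) (C := C)) where
  refl _ := ⟨Iso.refl _, by simp, by simp⟩
  symm := fun ⟨φ, h₁, h₂⟩ => ⟨φ.symm, by simp [← h₁], by simp [← h₂]⟩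
  trans := fun ⟨φ, h₁, h₂⟩ ⟨ψ, g₁, g₂⟩ => ⟨φ ≪≫ ψ, by simp [reassoc_of% h₁, g₁], by simp [g₂, h₂]⟩

lemma Ext1.mk_eq_mk_iff {A C : 𝒞} (e e' : Conf E A C) :
    Ext1.mk E e = Ext1.mk E e' ↔ ConfRel E e e' :=
  (confRel_equivalence E A C).quot_mk_eq_iff e e'

lemma confRel_of_hom {A C : 𝒞} (e e' : Conf E A C) (u : e.mid ⟶ e'.mid)
    (hi : e.incl ≫ u = e'.incl) (hp : u ≫ e'.quot = e.quot) : ConfRel E e e' :=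
  have := E.isIso_of_conf_comm e.isConf e'.isConf u hi hp
  ⟨asIso u, hi, hp⟩

abbrev Conf.map (hF : IsExactFunctor E' E F) {A C : 𝒞'} (e : Conf E' A C) :
    Conf E (F.obj A) (F.obj C) :=
  ⟨F.obj e.mid, F.map e.incl, F.map e.quot, hF _ _ e.isConf⟩

lemma ConfRel.map (hF : IsExactFunctor E' E F) {A C : 𝒞'} {e₁ e₂ : Conf E' A C}
    (h : ConfRel E' e₁ e₂) : ConfRel E (e₁.map hF) (e₂.map hF) :=
  let ⟨φ, h₁, h₂⟩ := h
  ⟨F.mapIso φ, by simp [Conf.map, ← F.map_comp, h₁], by simp [Conf.map, ← F.map_comp, h₂]⟩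

lemma ConfRel.of_map (hF : IsExactFunctor E' E F) [F.Full] [F.Faithful] {A C : 𝒞'}
    {e₁ e₂ : Conf E' A C} (h : ConfRel E (e₁.map hF) (e₂.map hF)) : ConfRel E' e₁ e₂ :=
  let ⟨φ, h₁, h₂⟩ := h
  ⟨F.preimageIso φ, F.map_injective (by simpa [Conf.map] using h₁),
    F.map_injective (by simpa [Conf.map] using h₂)⟩

def Ext1.map (hF : IsExactFunctor E' E F) {A C : 𝒞'} :
    Ext1 E' A C → Ext1 E (F.obj A) (F.obj C) :=
  Quot.map (Conf.map hF) fun _ _ => ConfRel.map hF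

lemma Ext1.map_injective (hF : IsExactFunctor E' E F) [F.Full] [F.Faithful] {A C : 𝒞'} :
    Function.Injective (Ext1.map hF (A := A) (C := C)) := by
  rintro ⟨e₁⟩ ⟨e₂⟩ h
  exact Quot.sound (ConfRel.of_map hF ((Ext1.mk_eq_mk_iff _ _).mp h))

lemma Conf.exists_confRel_map (hFrob' : IsFrobenius E') (hFrob : IsFrobenius E) [F.Additive]
    [F.Full] (hF : IsExactFunctor E' E F) (hproj : ∀ P : 𝒞', E'.Proj P → E.Proj (F.obj P))
    {A C : 𝒞'} (e : Conf E (F.obj A) (F.obj C)) : ∃ e' : Conf E' A C, ConfRel E (e'.map hF) e := by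
  obtain ⟨I, S, j, q, hI, hjq⟩ := hFrob'.enough_inj C
  have hFI : E.Inj (F.obj I) :=
    (hFrob.proj_iff_inj _).mp (hproj I ((hFrob'.proj_iff_inj I).mpr hI))
  obtain ⟨t, ht⟩ := hFI e.incl e.quot e.isConf (F.map j)
  obtain ⟨h₀, hh₀⟩ := E.exists_desc_of_conf e.isConf (t ≫ F.map q)
    (by rw [← Category.assoc, ht, ← F.map_comp, E'.comp_zero hjq, F.map_zero])
  -- `e` and the image of the pullback of `C ↣ I ↠ S` along `F.preimage h₀` both map to the
  -- pullback of `F C ↣ F I ↠ F S` along `h₀`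
  obtain ⟨M, l, p, g, hpb, hlg, hl⟩ := E'.exists_conf_pullback hjq (F.preimage h₀)
  obtain ⟨Z, lZ, pZ, gZ, hpbZ, hlZg, hlZ⟩ := E.exists_conf_pullback (hF _ _ hjq) h₀
  have hlZp : lZ ≫ pZ = 0 := E.comp_zero hlZ
  have hM : ConfRel E (Conf.map hF ⟨M, l, p, hl⟩) ⟨Z, lZ, pZ, hlZ⟩ := by
    refine confRel_of_hom _ _
      (hpbZ.lift (F.map g) (F.map p) (by rw [← F.map_comp, hpb.w, F.map_comp, F.map_preimage]))
      (hpbZ.hom_ext ?_ ?_) (hpbZ.lift_snd _ _ _)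
    · simp [← F.map_comp, hlg, hlZg]
    · simp [← F.map_comp, E'.comp_zero hl, hlZp]
  have he : ConfRel E e ⟨Z, lZ, pZ, hlZ⟩ := by
    refine confRel_of_hom _ _ (hpbZ.lift t e.quot (by rw [hh₀])) (hpbZ.hom_ext ?_ ?_)
      (hpbZ.lift_snd _ _ _)
    · simp [ht, hlZg]
    · simp [E.comp_zero e.isConf, hlZp]
  exact ⟨_, (confRel_equivalence E _ _).trans hM ((confRel_equivalence E _ _).symm he)⟩

end Functor

section HallMap

variable {𝒞' : Type u'} [Category.{v'} 𝒞'] [Preadditive 𝒞'] [HasZeroObject 𝒞']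
  [HasBinaryBiproducts 𝒞']
  {𝒞 : Type u} [Category.{v} 𝒞] [Preadditive 𝒞] [HasZeroObject 𝒞] [HasBinaryBiproducts 𝒞]
  {E' : ExactStructure 𝒞'} {E : ExactStructure 𝒞} {F : 𝒞' ⥤ 𝒞}

lemma exists_mk_eq_mk_and_iso_iff {A C : 𝒞} (e₀ : Conf E A C) (B : 𝒞) :
    (∃ e : Conf E A C, Ext1.mk E e = Ext1.mk E e₀ ∧ Nonempty (e.mid ≅ B)) ↔
      Nonempty (e₀.mid ≅ B) := by
  refine ⟨fun ⟨e, he, ⟨φ⟩⟩ => ?_, fun h => ⟨e₀, rfl, h⟩⟩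
  obtain ⟨ψ, -, -⟩ := (Ext1.mk_eq_mk_iff e e₀).mp he
  exact ⟨ψ.symm ≪≫ φ⟩

lemma ext1CardWith_map (hFrob' : IsFrobenius E') (hFrob : IsFrobenius E) [F.Additive] [F.Full]
    [F.Faithful] (hF : IsExactFunctor E' E F) (hproj : ∀ P : 𝒞', E'.Proj P → E.Proj (F.obj P))
    (A C B : 𝒞') : ext1CardWith E' A C B = ext1CardWith E (F.obj A) (F.obj C) (F.obj B) := by
  have hsurj : Function.Surjective (Ext1.map hF (A := A) (C := C)) := by
    rintro ⟨e⟩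
    obtain ⟨e', he'⟩ := Conf.exists_confRel_map hFrob' hFrob hF hproj e
    exact ⟨Ext1.mk E' e', Quot.sound he'⟩
  refine Nat.card_congr <| Equiv.subtypeEquiv
    (Equiv.ofBijective _ ⟨Ext1.map_injective hF, hsurj⟩) fun x => ?_
  induction x using Quot.ind with | _ e₀ => ?_
  exact (exists_mk_eq_mk_and_iso_iff e₀ B).trans <|
    (⟨fun ⟨φ⟩ => ⟨F.mapIso φ⟩, fun ⟨φ⟩ => ⟨F.preimageIso φ⟩⟩ : _ ↔ _).trans
      (exists_mk_eq_mk_and_iso_iff (e₀.map hF) (F.obj B)).symm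

lemma ext1CardWith_eq_zero_of_notMem_essImage (hFrob' : IsFrobenius E') (hFrob : IsFrobenius E)
    [F.Additive] [F.Full] (hF : IsExactFunctor E' E F)
    (hproj : ∀ P : 𝒞', E'.Proj P → E.Proj (F.obj P)) (A C : 𝒞') {D : 𝒞} (hD : ¬ F.essImage D) :
    ext1CardWith E (F.obj A) (F.obj C) D = 0 := by
  refine Nat.card_eq_zero.mpr (Or.inl ⟨fun ⟨_, e, _, ⟨φ⟩⟩ => hD ?_⟩)
  obtain ⟨e', ψ, -, -⟩ := Conf.exists_confRel_map hFrob' hFrob hF hproj e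
  exact ⟨e'.mid, ⟨ψ ≪≫ φ⟩⟩

lemma hallCoeff_map (hFrob' : IsFrobenius E') (hFrob : IsFrobenius E) [F.Additive] [F.Full]
    [F.Faithful] (hF : IsExactFunctor E' E F) (hproj : ∀ P : 𝒞', E'.Proj P → E.Proj (F.obj P))
    (A C B : 𝒞') : hallCoeff E' A C B = hallCoeff E (F.obj A) (F.obj C) (F.obj B) := by
  rw [hallCoeff, hallCoeff, ext1CardWith_map hFrob' hFrob hF hproj,
    Nat.card_congr (Functor.FullyFaithful.ofFullyFaithful F).homEquiv]

lemma hallMap_mul_hallBasis (hFrob' : IsFrobenius E') (hFrob : IsFrobenius E) [F.Additive]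
    [F.Full] [F.Faithful] (hF : IsExactFunctor E' E F)
    (hproj : ∀ P : 𝒞', E'.Proj P → E.Proj (F.obj P)) (hm' : HallMul E') (hm : HallMul E)
    (A C : 𝒞') :
    hallMap F (hm'.mul (hallBasis A) (hallBasis C)) =
      hm.mul (hallBasis (F.obj A)) (hallBasis (F.obj C)) := by
  ext δ
  obtain ⟨D, rfl⟩ := skel_surjective δ
  by_cases hD : F.essImage D
  · obtain ⟨B, ⟨φ⟩⟩ := hD
    have hB : skel (F.obj B) = skel D := Quotient.sound ⟨φ⟩
    rw [← hB, hm.mul_basis, ← skelMap_skel, hallMap, Finsupp.lmapDomain_apply,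
      Finsupp.mapDomain_apply (skelMap_injective F), hm'.mul_basis,
      hallCoeff_map hFrob' hFrob hF hproj]
  · rw [hm.mul_basis, hallCoeff,
      ext1CardWith_eq_zero_of_notMem_essImage hFrob' hFrob hF hproj A C hD, Nat.cast_zero,
      zero_div]
    refine Finsupp.mapDomain_of_notMem_range _ _ fun ⟨b, hb⟩ => ?_
    obtain ⟨B, rfl⟩ := skel_surjective b
    exact hD ⟨B, Quotient.exact hb⟩

lemma hallMap_mul (hFrob' : IsFrobenius E') (hFrob : IsFrobenius E) [F.Additive]
    [F.Full] [F.Faithful] (hF : IsExactFunctor E' E F)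
    (hproj : ∀ P : 𝒞', E'.Proj P → E.Proj (F.obj P)) (hm' : HallMul E') (hm : HallMul E)
    (x y : IsoCl 𝒞' →₀ ℚ) : hallMap F (hm'.mul x y) = hm.mul (hallMap F x) (hallMap F y) := by
  suffices hm'.mul.compr₂ (hallMap F) = (hm.mul.comp (hallMap F)).compl₂ (hallMap F) from
    LinearMap.congr_fun₂ this x y
  ext a c : 4
  obtain ⟨A, rfl⟩ := skel_surjective a
  obtain ⟨C, rfl⟩ := skel_surjective c
  change hallMap F (hm'.mul (hallBasis A) (hallBasis C)) =
    hm.mul (hallMap F (hallBasis A)) (hallMap F (hallBasis C))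
  rw [hallMap_hallBasis, hallMap_hallBasis]
  exact hallMap_mul_hallBasis hFrob' hFrob hF hproj hm' hm A C

end HallMap

theorem hall_algebra_functoriality_general
    {𝒞' : Type u'} [Category.{v'} 𝒞'] [Preadditive 𝒞']
    [HasZeroObject 𝒞'] [HasBinaryBiproducts 𝒞']
    {𝒞 : Type u} [Category.{v} 𝒞] [Preadditive 𝒞]
    [HasZeroObject 𝒞] [HasBinaryBiproducts 𝒞]
    (E' : ExactStructure 𝒞') (E : ExactStructure 𝒞)
    (hFrob' : IsFrobenius E') (hFrob : IsFrobenius E)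
    (F : 𝒞' ⥤ 𝒞) [F.Additive] [F.Full] [F.Faithful]
    (hexact : ∀ {X Y Z : 𝒞'} (i : X ⟶ Y) (p : Y ⟶ Z), E'.conf i p → E.conf (F.map i) (F.map p))
    (hproj : ∀ P : 𝒞', E'.Proj P → E.Proj (F.obj P))
    (hm' : HallMul E') (hm : HallMul E) :
    Function.Injective (hallMap F) ∧
    (∀ x y, hallMap F (hm'.mul x y) = hm.mul (hallMap F x) (hallMap F y)) :=
  ⟨hallMap_injective F, hallMap_mul hFrob' hFrob hexact hproj hm' hm⟩

/-- Corollary 3.4.  If `F : F' → F` is a fully faithful map between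
essentially small `Hom`-finite Frobenius categories linear over a finite field, then the
induced linear map `F₊ : H(F') → H(F)`, `[M] ↦ [F(M)]`, is an injective homomorphism of Hall
algebras. -/
theorem hall_algebra_functoriality
    {k : Type} [Field k] [Finite k]
    {𝒞' : Type u'} [Category.{v'} 𝒞'] [Preadditive 𝒞'] [CategoryTheory.Linear k 𝒞']
    [HasZeroObject 𝒞'] [HasBinaryBiproducts 𝒞'] [EssentiallySmall.{v'} 𝒞']
    {𝒞 : Type u} [Category.{v} 𝒞] [Preadditive 𝒞] [CategoryTheory.Linear k 𝒞]
    [HasZeroObject 𝒞] [HasBinaryBiproducts 𝒞] [EssentiallySmall.{v} 𝒞]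
    (E' : ExactStructure 𝒞') (E : ExactStructure 𝒞)
    (hFrob' : IsFrobenius E') (hFrob : IsFrobenius E)
    (homFin' : ∀ A B : 𝒞', Finite (A ⟶ B)) (homFin : ∀ A B : 𝒞, Finite (A ⟶ B))
    (F : 𝒞' ⥤ 𝒞) [F.Additive] [F.Full] [F.Faithful]
    (hexact : ∀ {X Y Z : 𝒞'} (i : X ⟶ Y) (p : Y ⟶ Z), E'.conf i p → E.conf (F.map i) (F.map p))
    (hproj : ∀ P : 𝒞', E'.Proj P → E.Proj (F.obj P))
    (hm' : HallMul E') (hm : HallMul E) :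
    Function.Injective (hallMap F) ∧
    (∀ x y, hallMap F (hm'.mul x y) = hm.mul (hallMap F x) (hallMap F y)) :=
  hall_algebra_functoriality_general E' E hFrob' hFrob F hexact hproj hm' hm

end HallPaper
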